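/- arXiv:2007.09018 — 2 statements merged into one kernel-verified Lean document; each statement's English description precedes it below -/
import Mathlib

section
/- Let G be a finite undirected multigraph, let S, T ⊆ V(G) be disjoint, and let X and Y be minimum (S,T)-cuts. Then δ(R_S(X) ∩ R_S(Y)) and δ(R_S(X) ∪ R_S(Y)) are also minimum (S,T)-cuts (uncrossing of minimum cuts). -/
/-!
A finite undirected multigraph (parallel edges allowed, no loops) is modelled by a
vertex type `V`, an edge type `E` (both finite) and an endpoint map `ends : E → Sym2 V`
such that no edge is a loop (`¬ (ends e).IsDiag`).
-/

namespace FlowAug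

variable {V E : Type}

/-- Two vertices are adjacent in `G - X` if some edge outside `X` joins them. -/
def Adj (ends : E → Sym2 V) (X : Set E) (u v : V) : Prop :=
  ∃ e, e ∉ X ∧ ends e = s(u, v)

/-- Reachability in `G - X`. -/
def Reach (ends : E → Sym2 V) (X : Set E) : V → V → Prop :=
  Relation.ReflTransGen (Adj ends X)

/-- `R_S(X)` : the set of vertices reachable from the vertex set `S` in `G - X`. -/
def RS (ends : E → Sym2 V) (X : Set E) (S : Set V) : Set V :=
  {v | ∃ u ∈ S, Reach ends X u v}

/-- `δ(S)` : the set of edges with exactly one endpoint in `S`. -/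
def edgeBoundary (ends : E → Sym2 V) (S : Set V) : Set E :=
  {e | ∃ u v, ends e = s(u, v) ∧ u ∈ S ∧ v ∉ S}

/-- `X` is an `(S,T)`-cut. -/
def IsCut (ends : E → Sym2 V) (X : Set E) (S T : Set V) : Prop :=
  RS ends X S ∩ RS ends X T = ∅

/-- `X` is a minimal `(S,T)`-cut: no proper subset of `X` is an `(S,T)`-cut. -/
def IsMinimalCut (ends : E → Sym2 V) (X : Set E) (S T : Set V) : Prop :=
  IsCut ends X S T ∧ ∀ Y : Set E, Y ⊂ X → ¬ IsCut ends Y S T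

/-- `X` is an `(S,T)`-cut of minimum cardinality. -/
def IsMinimumCut (ends : E → Sym2 V) (X : Set E) (S T : Set V) : Prop :=
  IsCut ends X S T ∧ ∀ Y : Set E, IsCut ends Y S T → X.ncard ≤ Y.ncard

/-- `X` is an `(S,T)`-cut that is closest to `S`: every `(S,T)`-cut `X' ≠ X` with
`R_S(X') ⊆ R_S(X)` satisfies `|X'| > |X|`. -/
def IsClosestCut (ends : E → Sym2 V) (X : Set E) (S T : Set V) : Prop :=
  IsCut ends X S T ∧
    ∀ X' : Set E, IsCut ends X' S T → X' ≠ X →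
      RS ends X' S ⊆ RS ends X S → X.ncard < X'.ncard

/-- `λ_G(s,t)` : the minimum cardinality of an `(s,t)`-cut (equivalently, by Menger's
theorem, the maximum number of pairwise edge-disjoint `(s,t)`-paths). -/
noncomputable def lamCut (ends : E → Sym2 V) (s t : V) : ℕ :=
  sInf {n | ∃ X : Set E, IsCut ends X {s} {t} ∧ X.ncard = n}

/-- `Z_{s,t}` : the edges of `Z` with one endpoint in `R_s(Z)` and one in `R_t(Z)`. -/
def Zst (ends : E → Sym2 V) (s t : V) (Z : Set E) : Set E :=
  {e | e ∈ Z ∧ ∃ u v, ends e = s(u, v) ∧ u ∈ RS ends Z {s} ∧ v ∈ RS ends Z {t}}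

/-- `Z` is a special `(s,t)`-cut: `Z` is an `(s,t)`-cut and `Z_{s,t}` is an `(s,t)`-cut. -/
def IsSpecial (ends : E → Sym2 V) (s t : V) (Z : Set E) : Prop :=
  IsCut ends Z {s} {t} ∧ IsCut ends (Zst ends s t Z) {s} {t}

/-- `Z` is eligible for `(s,t)`: special, and every edge of `Z` has its endpoints in
different connected components of `G - Z`. -/
def IsEligible (ends : E → Sym2 V) (s t : V) (Z : Set E) : Prop :=
  IsSpecial ends s t Z ∧ ∀ e ∈ Z, ∀ u v : V, ends e = s(u, v) → ¬ Reach ends Z u v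

/-- `Z` is a star `(s,t)`-cut: an `(s,t)`-cut each of whose edges has exactly one
endpoint in `R_s(Z)`. -/
def IsStarCut (ends : E → Sym2 V) (s t : V) (Z : Set E) : Prop :=
  IsCut ends Z {s} {t} ∧
    ∀ e ∈ Z, ∃ u v : V, ends e = s(u, v) ∧ u ∈ RS ends Z {s} ∧ v ∉ RS ends Z {s}

/-- A path from `s` to `t` in the multigraph described by `ends`, given by its
sequence of vertices and traversed edges. -/
structure MGPath (V E : Type) (ends : E → Sym2 V) (s t : V) where
  n : ℕ
  vert : Fin (n + 1) → V
  edge : Fin n → E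
  vert_zero : vert 0 = s
  vert_last : vert (Fin.last n) = t
  ends_eq : ∀ i : Fin n, ends (edge i) = s(vert i.castSucc, vert i.succ)

/-- A family of paths is (pairwise) edge-disjoint: no edge is used twice, neither on
a single path nor on two different paths. -/
def EdgeDisjoint {ends : E → Sym2 V} {s t : V} {k : ℕ}
    (P : Fin k → MGPath V E ends s t) : Prop :=
  Function.Injective fun p : (Σ i : Fin k, Fin (P i).n) => (P p.1).edge p.2

/-- `P` is a witnessing `(s,t)`-flow for `Z`: a family of `λ_G(s,t)` pairwise
edge-disjoint `(s,t)`-paths such that every edge of `Z_{s,t}` occurs on a path of `P`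
and every path of `P` contains exactly one edge of `Z`. -/
def IsWitnessingFlow (ends : E → Sym2 V) (s t : V) (Z : Set E) {k : ℕ}
    (P : Fin k → MGPath V E ends s t) : Prop :=
  k = lamCut ends s t ∧ EdgeDisjoint P ∧
    (∀ e ∈ Zst ends s t Z, ∃ (i : Fin k) (j : Fin (P i).n), (P i).edge j = e) ∧
    ∀ i : Fin k, ∃! j : Fin (P i).n, (P i).edge j ∈ Z

/-- The vertices occurring on the paths of a family `P`. -/
def pathVerts {ends : E → Sym2 V} {s t : V} {k : ℕ}
    (P : Fin k → MGPath V E ends s t) : Set V :=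
  {v | ∃ (i : Fin k) (m : Fin ((P i).n + 1)), (P i).vert m = v}

/-- The edges occurring on the paths of a family `P`. -/
def pathEdges {ends : E → Sym2 V} {s t : V} {k : ℕ}
    (P : Fin k → MGPath V E ends s t) : Set E :=
  {e | ∃ (i : Fin k) (j : Fin (P i).n), (P i).edge j = e}

/-- The arcs obtained by orienting every edge of every path of `P` in the forward
direction (from `s` towards `t`). -/
def DirAdjOnFlow {ends : E → Sym2 V} {s t : V} {k : ℕ}
    (P : Fin k → MGPath V E ends s t) (u v : V) : Prop :=
  ∃ (i : Fin k) (l : Fin (P i).n), (P i).vert l.castSucc = u ∧ (P i).vert l.succ = v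

/-- `N[S]` : the closed neighborhood of `S`. -/
def closedNbhd (ends : E → Sym2 V) (S : Set V) : Set V :=
  S ∪ {v | ∃ u ∈ S, ∃ e : E, ends e = s(u, v)}

/-- `X` is the minimum `(s,t)`-cut closest to `s` among all minimum `(s,t)`-cuts
satisfying the property `P`. -/
def IsClosestMinCutAmong (ends : E → Sym2 V) (s t : V) (P : Set E → Prop)
    (X : Set E) : Prop :=
  IsMinimumCut ends X {s} {t} ∧ P X ∧
    ∀ Y : Set E, IsMinimumCut ends Y {s} {t} → P Y → Y ≠ X →
      RS ends Y {s} ⊆ RS ends X {s} → X.ncard < Y.ncard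

/-- `C 0, …, C p` is the canonical sequence of non-crossing minimum `(s,t)`-cuts:
`C 0` is the unique minimum `(s,t)`-cut closest to `s`; `C i` is the unique minimum
`(s,t)`-cut closest to `s` among all minimum `(s,t)`-cuts `X` with
`N[R_s(C (i-1))] ⊆ R_s(X)`; and `p` is the largest index for which such a cut exists. -/
def CanonSeq (ends : E → Sym2 V) (s t : V) (p : ℕ) (C : ℕ → Set E) : Prop :=
  IsClosestMinCutAmong ends s t (fun _ => True) (C 0) ∧
    (∀ i : ℕ, 0 < i → i ≤ p →
      IsClosestMinCutAmong ends s t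
        (fun X => closedNbhd ends (RS ends (C (i - 1)) {s}) ⊆ RS ends X {s}) (C i)) ∧
    ¬ ∃ X : Set E, IsMinimumCut ends X {s} {t} ∧
        closedNbhd ends (RS ends (C p) {s}) ⊆ RS ends X {s}

/-- The blocks `V_0, …, V_{p+1}` associated with the canonical sequence of cuts. -/
def blockOf (ends : E → Sym2 V) (s : V) (p : ℕ) (C : ℕ → Set E) (i : ℕ) : Set V :=
  if i = 0 then RS ends (C 0) {s}
  else if i ≤ p then RS ends (C i) {s} \ RS ends (C (i - 1)) {s}
  else Set.univ \ RS ends (C p) {s}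

/-- Adjacency inside the induced subgraph `G[B]`. -/
def AdjIn (ends : E → Sym2 V) (B : Set V) (u v : V) : Prop :=
  u ∈ B ∧ v ∈ B ∧ ∃ e : E, ends e = s(u, v)

/-- Reachability inside the induced subgraph `G[B]`. -/
def ReachIn (ends : E → Sym2 V) (B : Set V) : V → V → Prop :=
  Relation.ReflTransGen (AdjIn ends B)

/-- The induced subgraph `G[B]` is connected. -/
def ConnIn (ends : E → Sym2 V) (B : Set V) : Prop :=
  ∀ u ∈ B, ∀ v ∈ B, ReachIn ends B u v

/-- The connected component of `u` in the induced subgraph `G[B]`. -/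
def compIn (ends : E → Sym2 V) (B : Set V) (u : V) : Set V :=
  {v | v ∈ B ∧ ReachIn ends B u v}

/-- The set of connected components of the induced subgraph `G[B]`. -/
def componentsIn (ends : E → Sym2 V) (B : Set V) : Set (Set V) :=
  {K | ∃ u ∈ B, K = compIn ends B u}

/-- The union of the blocks `V_a, …, V_b`. -/
def unionBlocks (ends : E → Sym2 V) (s : V) (p : ℕ) (C : ℕ → Set E)
    (a b : ℕ) : Set V :=
  ⋃ j ∈ Set.Icc a b, blockOf ends s p C j

/-- `st` encodes the decomposition of the blocks `V_0, …, V_{p+1}` into bundles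
`W_0, …, W_{q+1}`: bundle `W_i` consists of the blocks `V_{st i}, …, V_{st (i+1) - 1}`.
`W_0 = V_0`, and each further bundle is greedily either a single connected block, or a
maximal union of contiguous blocks inducing a disconnected subgraph. -/
def IsBundleSeq (ends : E → Sym2 V) (s : V) (p : ℕ) (C : ℕ → Set E)
    (q : ℕ) (st : ℕ → ℕ) : Prop :=
  st 0 = 0 ∧ st 1 = 1 ∧ st (q + 2) = p + 2 ∧
    (∀ i j : ℕ, i < j → j ≤ q + 2 → st i < st j) ∧
    ∀ i : ℕ, 1 ≤ i → i ≤ q + 1 →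
      (st (i + 1) = st i + 1 ∧ ConnIn ends (blockOf ends s p C (st i))) ∨
      (¬ ConnIn ends (blockOf ends s p C (st i)) ∧
        ¬ ConnIn ends (unionBlocks ends s p C (st i) (st (i + 1) - 1)) ∧
        ∀ j : ℕ, st (i + 1) - 1 < j → j ≤ p + 1 →
          ConnIn ends (unionBlocks ends s p C (st i) j))

/-- The bundle `W_i`. -/
def bundleOf (ends : E → Sym2 V) (s : V) (p : ℕ) (C : ℕ → Set E) (st : ℕ → ℕ)
    (i : ℕ) : Set V :=
  unionBlocks ends s p C (st i) (st (i + 1) - 1)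

/-- `C'_i` : the cut (among `C_0, …, C_p`) separating bundle `W_i` from `W_{i+1}`. -/
def interCut (C : ℕ → Set E) (st : ℕ → ℕ) (i : ℕ) : Set E :=
  C (st (i + 1) - 1)

/-- A bundle `W` is unaffected by `Z` if `N[W]` is contained in a single connected
component of `G - Z`. -/
def Unaffected (ends : E → Sym2 V) (Z : Set E) (W : Set V) : Prop :=
  ∀ u ∈ closedNbhd ends W, ∀ v ∈ closedNbhd ends W, Reach ends Z u v

/-- The stretch `W_{a,b} = W_a ∪ ⋯ ∪ W_b` of bundles. -/
def stretchSet (ends : E → Sym2 V) (s : V) (p : ℕ) (C : ℕ → Set E) (st : ℕ → ℕ)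
    (a b : ℕ) : Set V :=
  ⋃ i ∈ Set.Icc a b, bundleOf ends s p C st i

/-- The left interface of a stretch starting at bundle `W_a`. -/
def leftInterface (ends : E → Sym2 V) (s : V) (p : ℕ) (C : ℕ → Set E) (st : ℕ → ℕ)
    (a : ℕ) : Set V :=
  if a = 0 then {s}
  else {v | v ∈ bundleOf ends s p C st a ∧ ∃ e ∈ interCut C st (a - 1), v ∈ ends e}

/-- The right interface of a stretch ending at bundle `W_b`. -/
def rightInterface (ends : E → Sym2 V) (s t : V) (p : ℕ) (C : ℕ → Set E)
    (st : ℕ → ℕ) (q b : ℕ) : Set V :=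
  if b = q + 1 then {t}
  else {v | v ∈ bundleOf ends s p C st b ∧ ∃ e ∈ interCut C st b, v ∈ ends e}

/-- `W_{a,b}` is a maximal stretch of bundles all affected by `Z`. -/
def MaxAffStretch (ends : E → Sym2 V) (s : V) (p : ℕ) (C : ℕ → Set E)
    (st : ℕ → ℕ) (q : ℕ) (Z : Set E) (a b : ℕ) : Prop :=
  a ≤ b ∧ b ≤ q + 1 ∧
    (∀ i : ℕ, a ≤ i → i ≤ b → ¬ Unaffected ends Z (bundleOf ends s p C st i)) ∧
    (a = 0 ∨ Unaffected ends Z (bundleOf ends s p C st (a - 1))) ∧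
    (b = q + 1 ∨ Unaffected ends Z (bundleOf ends s p C st (b + 1)))

/-- `W_{a,b}` is a maximal stretch of bundles affected by `Z` containing both a vertex
reachable from `s` and a vertex reachable from `t` in `G - Z`. -/
def StronglyAffStretch (ends : E → Sym2 V) (s t : V) (p : ℕ) (C : ℕ → Set E)
    (st : ℕ → ℕ) (q : ℕ) (Z : Set E) (a b : ℕ) : Prop :=
  MaxAffStretch ends s p C st q Z a b ∧
    (stretchSet ends s p C st a b ∩ RS ends Z {s}).Nonempty ∧
    (stretchSet ends s p C st a b ∩ RS ends Z {t}).Nonempty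

/-- Adjacency inside the induced subgraph `G[B]` avoiding the edge set `X`. -/
def AdjInX (ends : E → Sym2 V) (B : Set V) (X : Set E) (u v : V) : Prop :=
  u ∈ B ∧ v ∈ B ∧ ∃ e, e ∉ X ∧ ends e = s(u, v)

/-- Reachability inside `G[B] - X`. -/
def ReachInX (ends : E → Sym2 V) (B : Set V) (X : Set E) : V → V → Prop :=
  Relation.ReflTransGen (AdjInX ends B X)

/-- `X` is a star `(a,b)`-cut of the induced subgraph `H = G[B]`: in `H - X` no path
connects `a` and `b`, and every edge of `X` has exactly one endpoint reachable from
`a` in `H - X`. -/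
def IsStarCutIn (ends : E → Sym2 V) (B : Set V) (a b : V) (X : Set E) : Prop :=
  ¬ ReachInX ends B X a b ∧
    ∀ e ∈ X, ∃ u v : V, ends e = s(u, v) ∧
      ReachInX ends B X a u ∧ ¬ ReachInX ends B X a v

end FlowAug

namespace FlowAug


lemma subset_RS' (ends : E → Sym2 V) (X : Set E) (S : Set V) : S ⊆ RS ends X S :=
  fun v hv => ⟨v, hv, Relation.ReflTransGen.refl⟩

lemma RS_boundary_subset' {ends : E → Sym2 V} {A S : Set V} (hSA : S ⊆ A) :
    RS ends (edgeBoundary ends A) S ⊆ A := by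
  rintro v ⟨u, hu, hreach⟩
  induction hreach with
  | refl => exact hSA hu
  | tail _ hadj ih =>
    obtain ⟨e, he, hee⟩ := hadj
    by_contra hv
    exact he ⟨_, _, hee, ih, hv⟩

lemma RS_boundary_compl' {ends : E → Sym2 V} {A T : Set V} (hTA : ∀ t ∈ T, t ∉ A) :
    ∀ v ∈ RS ends (edgeBoundary ends A) T, v ∉ A := by
  rintro v ⟨u, hu, hreach⟩
  induction hreach with
  | refl => exact hTA u hu
  | tail _ hadj ih =>
    intro hv
    obtain ⟨e, he, hee⟩ := hadj
    exact he ⟨_, _, by rw [hee, Sym2.eq_swap], hv, ih⟩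

lemma isCut_boundary' {ends : E → Sym2 V} {A S T : Set V}
    (hSA : S ⊆ A) (hTA : ∀ t ∈ T, t ∉ A) :
    IsCut ends (edgeBoundary ends A) S T := by
  ext v
  simp only [Set.mem_inter_iff, Set.mem_empty_iff_false, iff_false, not_and]
  intro hs ht
  exact RS_boundary_compl' hTA v ht (RS_boundary_subset' hSA hs)

lemma boundary_RS_subset' {ends : E → Sym2 V} {X : Set E} {S : Set V} :
    edgeBoundary ends (RS ends X S) ⊆ X := by
  rintro e ⟨u, v, hee, hu, hv⟩
  by_contra he
  obtain ⟨w, hw, hr⟩ := hu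
  exact hv ⟨w, hw, hr.tail ⟨e, he, hee⟩⟩

lemma mem_boundary_iff' {ends : E → Sym2 V} {A : Set V} {e : E} {u v : V}
    (h : ends e = s(u, v)) :
    e ∈ edgeBoundary ends A ↔ ((u ∈ A ∧ v ∉ A) ∨ (v ∈ A ∧ u ∉ A)) := by
  constructor
  · rintro ⟨a, b, hab, ha, hb⟩
    rw [h, Sym2.eq_iff] at hab
    rcases hab with ⟨h1, h2⟩ | ⟨h1, h2⟩
    · subst h1; subst h2; exact Or.inl ⟨ha, hb⟩
    · subst h1; subst h2; exact Or.inr ⟨ha, hb⟩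
  · rintro (⟨ha, hb⟩ | ⟨ha, hb⟩)
    · exact ⟨u, v, h, ha, hb⟩
    · exact ⟨v, u, by rw [h, Sym2.eq_swap], ha, hb⟩

lemma boundary_submodular' [Fintype E] (ends : E → Sym2 V) (A B : Set V) :
    (edgeBoundary ends (A ∩ B)).ncard + (edgeBoundary ends (A ∪ B)).ncard ≤
    (edgeBoundary ends A).ncard + (edgeBoundary ends B).ncard := by
  have h1 : edgeBoundary ends (A ∩ B) ∩ edgeBoundary ends (A ∪ B) ⊆
      edgeBoundary ends A ∩ edgeBoundary ends B := by
    rintro e ⟨he1, he2⟩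
    obtain ⟨⟨u, v⟩, h⟩ := Quot.exists_rep (ends e)
    have h : ends e = s(u, v) := h.symm
    rw [mem_boundary_iff' h] at he1 he2
    rw [Set.mem_inter_iff, mem_boundary_iff' h, mem_boundary_iff' h]
    simp only [Set.mem_inter_iff, Set.mem_union] at he1 he2
    tauto
  have h2 : edgeBoundary ends (A ∩ B) ∪ edgeBoundary ends (A ∪ B) ⊆
      edgeBoundary ends A ∪ edgeBoundary ends B := by
    rintro e he
    obtain ⟨⟨u, v⟩, h⟩ := Quot.exists_rep (ends e)
    have h : ends e = s(u, v) := h.symm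
    rw [Set.mem_union, mem_boundary_iff' h, mem_boundary_iff' h] at he
    rw [Set.mem_union, mem_boundary_iff' h, mem_boundary_iff' h]
    simp only [Set.mem_inter_iff, Set.mem_union] at he
    tauto
  calc (edgeBoundary ends (A ∩ B)).ncard + (edgeBoundary ends (A ∪ B)).ncard
      = (edgeBoundary ends (A ∩ B) ∩ edgeBoundary ends (A ∪ B)).ncard +
        (edgeBoundary ends (A ∩ B) ∪ edgeBoundary ends (A ∪ B)).ncard := by
        rw [Set.ncard_inter_add_ncard_union]
    _ ≤ (edgeBoundary ends A ∩ edgeBoundary ends B).ncard +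
        (edgeBoundary ends A ∪ edgeBoundary ends B).ncard := by
        exact Nat.add_le_add (Set.ncard_le_ncard h1 (Set.toFinite _))
          (Set.ncard_le_ncard h2 (Set.toFinite _))
    _ = (edgeBoundary ends A).ncard + (edgeBoundary ends B).ncard := by
        rw [Set.ncard_inter_add_ncard_union]

/-- uncrossing of minimum cuts. For disjoint `S, T ⊆ V(G)` and
minimum `(S,T)`-cuts `X` and `Y`, both `δ(R_S(X) ∩ R_S(Y))` and `δ(R_S(X) ∪ R_S(Y))`
are minimum `(S,T)`-cuts. -/
theorem uncrossing_minimumCuts {V E : Type} [Fintype V] [Fintype E]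
    (ends : E → Sym2 V) (hloop : ∀ e, ¬ (ends e).IsDiag)
    (S T : Set V) (hST : S ∩ T = ∅) (X Y : Set E)
    (hX : IsMinimumCut ends X S T) (hY : IsMinimumCut ends Y S T) :
    IsMinimumCut ends (edgeBoundary ends (RS ends X S ∩ RS ends Y S)) S T ∧
      IsMinimumCut ends (edgeBoundary ends (RS ends X S ∪ RS ends Y S)) S T := by
  classical
  set A := RS ends X S with hA
  set B := RS ends Y S with hB
  -- S inside A and B
  have hSA : S ⊆ A := subset_RS' ends X S
  have hSB : S ⊆ B := subset_RS' ends Y S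
  have hTA : ∀ t ∈ T, t ∉ A := by
    intro t ht hta
    have : t ∈ RS ends X S ∩ RS ends X T := ⟨hta, subset_RS' ends X T ht⟩
    rw [hX.1] at this; exact this
  have hTB : ∀ t ∈ T, t ∉ B := by
    intro t ht htb
    have : t ∈ RS ends Y S ∩ RS ends Y T := ⟨htb, subset_RS' ends Y T ht⟩
    rw [hY.1] at this; exact this
  -- the two boundaries are cuts
  have hcutI : IsCut ends (edgeBoundary ends (A ∩ B)) S T :=
    isCut_boundary' (fun v hv => ⟨hSA hv, hSB hv⟩) (fun t ht hta => hTA t ht hta.1)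
  have hcutU : IsCut ends (edgeBoundary ends (A ∪ B)) S T :=
    isCut_boundary' (fun v hv => Or.inl (hSA hv))
      (fun t ht hta => hta.elim (hTA t ht) (hTB t ht))
  -- cardinality bookkeeping
  have hdAX : (edgeBoundary ends A).ncard ≤ X.ncard :=
    Set.ncard_le_ncard boundary_RS_subset' (Set.toFinite _)
  have hdBY : (edgeBoundary ends B).ncard ≤ Y.ncard :=
    Set.ncard_le_ncard boundary_RS_subset' (Set.toFinite _)
  have hsub := boundary_submodular' ends A B
  have hXI : X.ncard ≤ (edgeBoundary ends (A ∩ B)).ncard := hX.2 _ hcutI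
  have hXU : X.ncard ≤ (edgeBoundary ends (A ∪ B)).ncard := hX.2 _ hcutU
  have hXY : X.ncard ≤ Y.ncard := hX.2 _ hY.1
  have hYX : Y.ncard ≤ X.ncard := hY.2 _ hX.1
  have hI : (edgeBoundary ends (A ∩ B)).ncard = X.ncard := by omega
  have hU : (edgeBoundary ends (A ∪ B)).ncard = X.ncard := by omega
  exact ⟨⟨hcutI, fun Z hZ => hI ▸ hX.2 Z hZ⟩, ⟨hcutU, fun Z hZ => hU ▸ hX.2 Z hZ⟩⟩


end FlowAug
end

section
/- Let G be a finite undirected multigraph, let s, t ∈ V(G) with s ≠ t, let Z ⊆ E(G) be a special (s,t)-cut, and let λ* = |Z_{s,t}|. Then there exists a λ*-flow-augmenting multiset A of vertex pairs that is compatible with Z, together with a witnessing (s,t)-flow for Z in G + A of cardinality λ*. -/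
/-!
For every edge `xy` of `Z_{s,t}` with `x ∈ R_s(Z)` and `y ∈ R_t(Z)` add the pairs `sx` and `yt`;
both lie inside components of `G − Z`. The paths `s x y t` are edge-disjoint and each meets `Z`
only in `xy`, so `λ_{G+A}(s,t) ≥ |Z_{s,t}|`. The new pairs also lie inside components of
`G − Z_{s,t}`, so `Z_{s,t}` remains an `(s,t)`-cut of `G + A` and the bound is attained.
Adding such pairs creates no new reachability in `G − Z`, so `Z_{s,t}` computed in `G + A` is
contained in the old one, which the paths cover.
-/

namespace FlowAug

variable {V E E' ι : Type} {ends : E → Sym2 V} {X Y : Set E} {s t u v : V}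

lemma Adj.symm (h : Adj ends X u v) : Adj ends X v u := by
  obtain ⟨e, he, hends⟩ := h
  exact ⟨e, he, hends.trans Sym2.eq_swap⟩

lemma Reach.symm (h : Reach ends X u v) : Reach ends X v u := by
  induction h with
  | refl => exact .refl
  | tail _ hadj ih => exact .head hadj.symm ih

lemma Reach.anti (hXY : X ⊆ Y) (h : Reach ends Y u v) : Reach ends X u v :=
  Relation.ReflTransGen.mono (fun _ _ ⟨e, he, hends⟩ => ⟨e, fun heX => he (hXY heX), hends⟩) _ _ h

@[simp]
lemma mem_RS_singleton : v ∈ RS ends X {u} ↔ Reach ends X u v := by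
  simp [RS]

lemma Zst_subset : Zst ends s t X ⊆ X := fun _ he => he.1

lemma MGPath.reach_of_forall_edge_not_mem {ends' : E' → Sym2 V} (P : MGPath V E' ends' s t)
    {X : Set E'} (hP : ∀ j, P.edge j ∉ X) : Reach ends' X s t := by
  have key : ∀ l : Fin (P.n + 1), Reach ends' X s (P.vert l) := by
    intro l
    induction l using Fin.induction with
    | zero => rw [P.vert_zero]; exact .refl
    | succ l ih => exact ih.tail ⟨P.edge l, hP l, P.ends_eq l⟩
  simpa [P.vert_last] using key (Fin.last P.n)

lemma IsCut.not_reach (hX : IsCut ends X {s} {t}) : ¬ Reach ends X s t := fun h =>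
  (Set.eq_empty_iff_forall_notMem.1 hX) t ⟨mem_RS_singleton.2 h, mem_RS_singleton.2 .refl⟩

/-- Weak duality: every path of an edge-disjoint family meets the cut in a private edge. -/
lemma EdgeDisjoint.card_le_ncard {k : ℕ} {P : Fin k → MGPath V E ends s t}
    (hP : EdgeDisjoint P) (hXfin : X.Finite) (hX : IsCut ends X {s} {t}) : k ≤ X.ncard := by
  have hmeet : ∀ i, ∃ j, (P i).edge j ∈ X := fun i => by
    by_contra! h
    exact hX.not_reach ((P i).reach_of_forall_edge_not_mem h)
  choose j hj using hmeet
  have hinj : Function.Injective fun i => (P i).edge (j i) := fun i i' h =>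
    congrArg Sigma.fst (hP (a₁ := ⟨i, j i⟩) (a₂ := ⟨i', j i'⟩) h)
  calc k = (Set.range fun i => (P i).edge (j i)).ncard := by
        rw [← Nat.card_coe_set_eq, Nat.card_range_of_injective hinj, Nat.card_eq_fintype_card,
          Fintype.card_fin]
    _ ≤ X.ncard := Set.ncard_le_ncard (Set.range_subset_iff.2 hj) hXfin

lemma lamCut_le_ncard (hX : IsCut ends X {s} {t}) : lamCut ends s t ≤ X.ncard :=
  Nat.sInf_le ⟨X, hX, rfl⟩

lemma lamCut_eq_of_edgeDisjoint_of_isCut [Finite E] {k : ℕ} {P : Fin k → MGPath V E ends s t}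
    (hP : EdgeDisjoint P) (hX : IsCut ends X {s} {t}) (hXk : X.ncard = k) :
    lamCut ends s t = k := by
  refine le_antisymm (hXk ▸ lamCut_le_ncard hX) ?_
  obtain ⟨Y, hY, hYcard⟩ := Nat.sInf_mem (⟨_, X, hX, rfl⟩ :
    {n | ∃ Y : Set E, IsCut ends Y {s} {t} ∧ Y.ncard = n}.Nonempty)
  exact (hP.card_le_ncard (Set.toFinite Y) hY).trans_eq hYcard

section Augmentation

variable {a : ι → Sym2 V}

def Compatible (ends : E → Sym2 V) (Y : Set E) (a : ι → Sym2 V) : Prop :=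
  ∀ (i : ι) (u v : V), a i = s(u, v) → Reach ends Y u v

lemma Compatible.anti (hXY : X ⊆ Y) (h : Compatible ends Y a) : Compatible ends X a :=
  fun i u v hi => (h i u v hi).anti hXY

lemma Compatible.reach_of_reach_sumElim (h : Compatible ends Y a)
    (huv : Reach (Sum.elim ends a) (Sum.inl '' Y) u v) : Reach ends Y u v := by
  refine Relation.reflTransGen_closed (fun x y hxy => ?_) _ _ huv
  obtain ⟨e | i, he, hends⟩ := hxy
  · exact .single ⟨e, fun heY => he ⟨e, heY, rfl⟩, hends⟩
  · exact h i x y hends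

lemma Compatible.RS_sumElim_subset (h : Compatible ends Y a) (S : Set V) :
    RS (Sum.elim ends a) (Sum.inl '' Y) S ⊆ RS ends Y S := fun _ ⟨x, hx, hreach⟩ =>
  ⟨x, hx, h.reach_of_reach_sumElim hreach⟩

lemma IsCut.sumElim {S T : Set V} (hY : IsCut ends Y S T) (h : Compatible ends Y a) :
    IsCut (Sum.elim ends a) (Sum.inl '' Y) S T :=
  Set.subset_empty_iff.1 <| hY ▸ Set.inter_subset_inter (h.RS_sumElim_subset S)
    (h.RS_sumElim_subset T)

lemma Compatible.Zst_sumElim_subset (h : Compatible ends Y a) :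
    Zst (Sum.elim ends a) s t (Sum.inl '' Y) ⊆ Sum.inl '' Zst ends s t Y := by
  rintro _ ⟨⟨e, heY, rfl⟩, x, y, hends, hx, hy⟩
  exact ⟨e, ⟨heY, x, y, hends, h.RS_sumElim_subset _ hx, h.RS_sumElim_subset _ hy⟩, rfl⟩

end Augmentation

def MGPath.ofThree {x y : V} {e₁ e₂ e₃ : E} (h₁ : ends e₁ = s(s, x)) (h₂ : ends e₂ = s(x, y))
    (h₃ : ends e₃ = s(y, t)) : MGPath V E ends s t where
  n := 3
  vert := ![s, x, y, t]
  edge := ![e₁, e₂, e₃]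
  vert_zero := rfl
  vert_last := rfl
  ends_eq i := by fin_cases i <;> assumption

section ThreePaths

variable {k : ℕ} {f : Fin k → E} {x y : Fin k → V}

def augPairs (s t : V) (x y : Fin k → V) : Fin (k + k) → Sym2 V :=
  Fin.append (fun i => s(s, x i)) (fun i => s(y i, t))

lemma compatible_augPairs (hx : ∀ i, x i ∈ RS ends Y {s}) (hy : ∀ i, y i ∈ RS ends Y {t}) :
    Compatible ends Y (augPairs s t x y) := by
  intro j p q hj
  induction j using Fin.addCases with
  | left i =>
    rw [augPairs, Fin.append_left, Sym2.eq_iff] at hj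
    obtain ⟨rfl, rfl⟩ | ⟨rfl, rfl⟩ := hj
    · exact mem_RS_singleton.1 (hx i)
    · exact (mem_RS_singleton.1 (hx i)).symm
  | right i =>
    rw [augPairs, Fin.append_right, Sym2.eq_iff] at hj
    obtain ⟨rfl, rfl⟩ | ⟨rfl, rfl⟩ := hj
    · exact (mem_RS_singleton.1 (hy i)).symm
    · exact mem_RS_singleton.1 (hy i)

def augPath (hends : ∀ i, ends (f i) = s(x i, y i)) (i : Fin k) :
    MGPath V (E ⊕ Fin (k + k)) (Sum.elim ends (augPairs s t x y)) s t :=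
  MGPath.ofThree (e₁ := .inr (Fin.castAdd k i)) (e₂ := .inl (f i)) (e₃ := .inr (Fin.natAdd k i))
    (by rw [Sum.elim_inr, augPairs, Fin.append_left]) (hends i)
    (by rw [Sum.elim_inr, augPairs, Fin.append_right])

variable (hends : ∀ i, ends (f i) = s(x i, y i))

lemma augPath_edgeDisjoint (hf : Function.Injective f) :
    EdgeDisjoint (augPath (s := s) (t := t) hends) := by
  rintro ⟨i, l⟩ ⟨i', l'⟩ h
  have hi := i.isLt
  fin_cases l <;> fin_cases l' <;>
    simp [augPath, MGPath.ofThree, hf.eq_iff, Fin.ext_iff] at h ⊢ <;> omega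

lemma exists_augPath_edge_eq_inl (i : Fin k) :
    ∃ j, (augPath (s := s) (t := t) hends i).edge j = .inl (f i) :=
  ⟨⟨1, (by decide : 1 < 3)⟩, rfl⟩

lemma augPath_existsUnique_edge_mem (hfY : ∀ i, f i ∈ Y) (i : Fin k) :
    ∃! j, (augPath (s := s) (t := t) hends i).edge j ∈ Sum.inl '' Y := by
  refine ⟨⟨1, (by decide : 1 < 3)⟩, ⟨f i, hfY i, rfl⟩, fun l hl => ?_⟩
  fin_cases l <;> simp [augPath, MGPath.ofThree] at hl ⊢

end ThreePaths

lemma _root_.Set.Finite.exists_injective_fin_ncard_range_eq {α : Type*} {S : Set α}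
    (hS : S.Finite) : ∃ f : Fin S.ncard → α, Function.Injective f ∧ Set.range f = S := by
  have := hS.to_subtype
  let g := (Finite.equivFin S).symm
  rw [Nat.card_coe_set_eq] at g
  exact ⟨Subtype.val ∘ g, Subtype.val_injective.comp g.injective,
    by rw [g.surjective.range_comp, Subtype.range_coe]⟩

/-- The multiset `A` is a family `a : Fin m → Sym2 V`; `G + A` has edge type `E ⊕ Fin m` and
endpoint map `Sum.elim ends a`. -/
theorem specialCut_flowAugmenting_and_witnessingFlow_general {V E : Type} [Fintype E]
    (ends : E → Sym2 V)
    (s t : V)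
    (Z : Set E) (hZ : IsSpecial ends s t Z)
    (lamStar : ℕ) (hlamStar : lamStar = (Zst ends s t Z).ncard) :
    ∃ (m : ℕ) (a : Fin m → Sym2 V),
      (∀ (i : Fin m) (u v : V), a i = s(u, v) → Reach ends Z u v) ∧
      lamStar ≤ lamCut (Sum.elim ends a) s t ∧
      ∃ P : Fin lamStar → MGPath V (E ⊕ Fin m) (Sum.elim ends a) s t,
        IsWitnessingFlow (Sum.elim ends a) s t (Sum.inl '' Z) P := by
  subst hlamStar
  obtain ⟨f, hf, hf_range⟩ := (Set.toFinite (Zst ends s t Z)).exists_injective_fin_ncard_range_eq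
  have hf_mem : ∀ i, f i ∈ Zst ends s t Z := fun i => hf_range ▸ Set.mem_range_self i
  choose x y hends hx hy using fun i => (hf_mem i).2
  have hcompat : Compatible ends Z (augPairs s t x y) := compatible_augPairs hx hy
  have hcut := hZ.2.sumElim (hcompat.anti Zst_subset)
  have hdisj := augPath_edgeDisjoint (s := s) (t := t) hends hf
  have hlam := lamCut_eq_of_edgeDisjoint_of_isCut hdisj hcut
    (Set.ncard_image_of_injective _ Sum.inl_injective)
  refine ⟨_, _, hcompat, hlam.ge, augPath hends, hlam.symm, hdisj, ?_,
    augPath_existsUnique_edge_mem hends fun i => Zst_subset (hf_mem i)⟩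
  intro e he
  obtain ⟨e, heZ, rfl⟩ := hcompat.Zst_sumElim_subset he
  rw [← hf_range] at heZ
  obtain ⟨i, rfl⟩ := heZ
  exact ⟨i, exists_augPath_edge_eq_inl hends i⟩

/-- For a special `(s,t)`-cut `Z` with `λ* = |Z_{s,t}|` there exists a
`λ*`-flow-augmenting multiset `A` of vertex pairs compatible with `Z` together with a
witnessing `(s,t)`-flow for `Z` in `G + A` of cardinality `λ*`.  The multiset `A` is
modelled as a family `a : Fin m → Sym2 V` of vertex pairs; `G + A` is the multigraph
with edge type `E ⊕ Fin m` and endpoint map `Sum.elim ends a`. -/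
theorem specialCut_flowAugmenting_and_witnessingFlow {V E : Type} [Fintype V] [Fintype E]
    (ends : E → Sym2 V) (hloop : ∀ e, ¬ (ends e).IsDiag)
    (s t : V) (hst : s ≠ t)
    (Z : Set E) (hZ : IsSpecial ends s t Z)
    (lamStar : ℕ) (hlamStar : lamStar = (Zst ends s t Z).ncard) :
    ∃ (m : ℕ) (a : Fin m → Sym2 V),
      (∀ (i : Fin m) (u v : V), a i = s(u, v) → Reach ends Z u v) ∧
      lamStar ≤ lamCut (Sum.elim ends a) s t ∧
      ∃ P : Fin lamStar → MGPath V (E ⊕ Fin m) (Sum.elim ends a) s t,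
        IsWitnessingFlow (Sum.elim ends a) s t (Sum.inl '' Z) P :=
  specialCut_flowAugmenting_and_witnessingFlow_general ends s t Z hZ lamStar hlamStar

end FlowAug
end
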